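/- arXiv:1005.5173 — 6 statements merged into one kernel-verified Lean document; each statement's English description precedes it below -/
import Mathlib

section
/- Suppose A, B, C are inputs and X, Y, Z outputs of a tripartite conditional distribution P_{XYZ|ABC}, and suppose the free choice condition holds for A: the distribution of A is independent of (B, C, Y, Z), i.e., P_{A|BCYZ} = P_A with P_A(a) > 0 for all a. Then the non-signalling condition P_{YZ|ABC} = P_{YZ|BC} holds. -/
/-!
Write `T(y, z) = P_{BCYZ}(b, c, y, z)`. Free choice says `P_{ABCYZ}(a, b, c, y, z) = P_A(a) T(y, z)`
whenever `T(y, z) > 0`, and by nonnegativity also when `T(y, z) = 0`. Hence `P_{ABCYZ}(a, b, c, ·, ·)`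
is the multiple `P_A(a) > 0` of `T`, and normalising both over `(y, z)` gives the same
distribution `P_{YZ|ABC} = P_{YZ|BC}`.
-/

open Finset

theorem Finset.sum_comm_three {ι κ μ M : Type*} [AddCommMonoid M] {s : Finset ι} {t : Finset κ}
    {u : Finset μ} (f : ι → κ → μ → M) :
    ∑ i ∈ s, ∑ j ∈ t, ∑ k ∈ u, f i j k = ∑ j ∈ t, ∑ k ∈ u, ∑ i ∈ s, f i j k := by
  rw [Finset.sum_comm]
  exact Finset.sum_congr rfl fun _ _ => Finset.sum_comm

theorem eq_mul_sum_of_div_sum_eq {ι K : Type*} [Fintype ι] [Field K] [LinearOrder K]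
    [IsStrictOrderedRing K] {f : ι → K} (hf : ∀ j, 0 ≤ f j) (i : ι) {p : K} (h : 0 < ∑ j, f j → f i / ∑ j, f j = p) : f i = p * ∑ j, f j := by
  rcases (Finset.sum_nonneg fun j _ => hf j).eq_or_lt with hzero | hpos
  · rw [← hzero, mul_zero]
    exact (Finset.sum_eq_zero_iff_of_nonneg fun j _ => hf j).mp hzero.symm i (mem_univ i)
  · rw [← h hpos, div_mul_cancel₀ _ hpos.ne']

theorem div_sum_sum_eq_of_eq_mul {υ ζ K : Type*} [Fintype υ] [Fintype ζ] [Field K]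
    {g h : υ → ζ → K} {p : K} (hp : p ≠ 0) (hgh : ∀ y z, g y z = p * h y z) (y : υ) (z : ζ) :
    g y z / ∑ y', ∑ z', g y' z' = h y z / ∑ y', ∑ z', h y' z' := by
  simp only [hgh, ← Finset.mul_sum]
  exact mul_div_mul_left _ _ hp

theorem free_choice_implies_non_signalling_general
    {α β γ ξ υ ζ : Type*} [Fintype α] [Fintype β] [Fintype γ]
    [Fintype ξ] [Fintype υ] [Fintype ζ]
    (Pin : α → β → γ → ℝ) (Pc : α → β → γ → ξ → υ → ζ → ℝ)
    (hPin0 : ∀ a b c, 0 ≤ Pin a b c)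
    (hPc0 : ∀ a b c x y z, 0 ≤ Pc a b c x y z)
    -- the joint distribution
    (J : α → β → γ → ξ → υ → ζ → ℝ)
    (hJ : ∀ a b c x y z, J a b c x y z = Pin a b c * Pc a b c x y z)
    -- free choice: P_{A|BCYZ} = P_A, with P_A(a) > 0 for all a
    (hApos : ∀ a, 0 < ∑ b, ∑ c, ∑ x, ∑ y, ∑ z, J a b c x y z)
    (hfree : ∀ a b c y z, (0 < ∑ a', ∑ x, J a' b c x y z) →
      (∑ x, J a b c x y z) / (∑ a', ∑ x, J a' b c x y z) =
        ∑ b', ∑ c', ∑ x, ∑ y', ∑ z', J a b' c' x y' z') :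
    -- non-signalling: P_{YZ|ABC} = P_{YZ|BC}
    ∀ a b c y z, (0 < ∑ x, ∑ y', ∑ z', J a b c x y' z') →
      (0 < ∑ a', ∑ x, ∑ y', ∑ z', J a' b c x y' z') →
      (∑ x, J a b c x y z) / (∑ x, ∑ y', ∑ z', J a b c x y' z') =
        (∑ a', ∑ x, J a' b c x y z) / (∑ a', ∑ x, ∑ y', ∑ z', J a' b c x y' z') := by
  intro a b c y z _ _
  have hJ0 : ∀ a b c x y z, 0 ≤ J a b c x y z := fun a b c x y z => by
    rw [hJ]; exact mul_nonneg (hPin0 _ _ _) (hPc0 _ _ _ _ _ _)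
  have hfactor : ∀ y z, ∑ x, J a b c x y z =
      (∑ b', ∑ c', ∑ x, ∑ y', ∑ z', J a b' c' x y' z') * ∑ a', ∑ x, J a' b c x y z :=
    fun y z => eq_mul_sum_of_div_sum_eq (fun a' => sum_nonneg fun x _ => hJ0 a' b c x y z) a
      (hfree a b c y z)
  rw [sum_comm_three, Finset.sum_congr rfl fun a' _ => sum_comm_three (J a' b c),
    sum_comm_three fun a' y' z' => ∑ x, J a' b c x y' z']
  exact div_sum_sum_eq_of_eq_mul (hApos a).ne' hfactor y z

/-- Free choice implies non-signalling.  `Pin` is the input distribution `P_{ABC}` and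
`Pc` is the conditional distribution `P_{XYZ|ABC}`; together they define the joint
distribution `J`.  If `A` is a free choice, i.e. `P_{A|BCYZ} = P_A` with `P_A(a) > 0`
for all `a`, then the non-signalling condition `P_{YZ|ABC} = P_{YZ|BC}` holds. -/
theorem free_choice_implies_non_signalling
    {α β γ ξ υ ζ : Type*} [Fintype α] [Fintype β] [Fintype γ]
    [Fintype ξ] [Fintype υ] [Fintype ζ]
    (Pin : α → β → γ → ℝ) (Pc : α → β → γ → ξ → υ → ζ → ℝ)
    (hPin0 : ∀ a b c, 0 ≤ Pin a b c) (hPin1 : ∑ a, ∑ b, ∑ c, Pin a b c = 1)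
    (hPc0 : ∀ a b c x y z, 0 ≤ Pc a b c x y z)
    (hPc1 : ∀ a b c, ∑ x, ∑ y, ∑ z, Pc a b c x y z = 1)
    -- the joint distribution
    (J : α → β → γ → ξ → υ → ζ → ℝ)
    (hJ : ∀ a b c x y z, J a b c x y z = Pin a b c * Pc a b c x y z)
    -- free choice: P_{A|BCYZ} = P_A, with P_A(a) > 0 for all a
    (hApos : ∀ a, 0 < ∑ b, ∑ c, ∑ x, ∑ y, ∑ z, J a b c x y z)
    (hfree : ∀ a b c y z, (0 < ∑ a', ∑ x, J a' b c x y z) →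
      (∑ x, J a b c x y z) / (∑ a', ∑ x, J a' b c x y z) =
        ∑ b', ∑ c', ∑ x, ∑ y', ∑ z', J a b' c' x y' z') :
    -- non-signalling: P_{YZ|ABC} = P_{YZ|BC}
    ∀ a b c y z, (0 < ∑ x, ∑ y', ∑ z', J a b c x y' z') →
      (0 < ∑ a', ∑ x, ∑ y', ∑ z', J a' b c x y' z') →
      (∑ x, J a b c x y z) / (∑ x, ∑ y', ∑ z', J a b c x y' z') =
        (∑ a', ∑ x, J a' b c x y z) / (∑ a', ∑ x, ∑ y', ∑ z', J a' b c x y' z') :=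
  free_choice_implies_non_signalling_general Pin Pc hPin0 hPc0 J hJ hApos hfree
end

section
/- Let P_{XY|AB} be a conditional distribution with binary outputs X, Y ∈ {0,1}, inputs A ∈ {0,2,...,2N−2}, B ∈ {1,3,...,2N−1}, and define I_N := P(X=Y | A=0, B=2N−1) + ∑_{|a−b|=1} P(X≠Y | A=a, B=b). Suppose P_{XYZ|ABC} is a non-signalling extension, meaning P_{XY|ABC}=P_{XY|AB}, P_{XZ|ABC}=P_{XZ|AC}, and P_{YZ|ABC}=P_{YZ|BC}. Then for all a, b, c, z, the conditional distribution of X satisfies |P_{X|abcz}(x) − 1/2| ≤ (1/2) I_N(P_{XY|AB,cz}), where P_{XY|AB,cz} denotes conditioning additionally on C=c, Z=z. -/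
/-!
Fix `c, z`. By non-signalling the mass `P(c, z | a, b)` does not depend on `(a, b)`, so
`P_{XY|AB,cz}` is again a non-signalling box. In such a box fix `x` and walk along the chain
`P(X=x|A=0), P(Y=x|B=1), P(X=x|A=2), …, P(Y=x|B=2N−1)`: two neighbours are the two marginals of
one joint distribution `P_{XY|ab}` with `|a − b| = 1`, hence differ by at most `P(X≠Y|a,b)`;
for binary outputs the ends satisfy `|P(X=x|A=0) + P(Y=x|B=2N−1) − 1| ≤ P(X=Y|0,2N−1)`.
Walking from `P(X=x|A=a)` to both ends gives `|2 P(X=x|A=a) − 1| ≤ I_N`.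
-/

open Finset

/-- The chained Bell quantity `I_N` for a conditional distribution `Q` of binary outcomes
`(X,Y)` given settings `(A,B)`.  The settings `A ∈ {0,2,…,2N}` are indexed by
`a : Fin (N+1)` (setting `2a`) and `B ∈ {1,3,…,2N+1}` by `b : Fin (N+1)` (setting `2b+1`);
`|A − B| = 1` holds exactly for the pairs `(a, b) = (i, i)` and `(a, b) = (i+1, i)`.
`I_N := P(X=Y | A=0, B=2N+1) + ∑_{|A−B|=1} P(X≠Y | A, B)`. -/
noncomputable def chainedBell {N : ℕ} (Q : Fin (N + 1) → Fin (N + 1) → Fin 2 → Fin 2 → ℝ) :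
    ℝ :=
  (∑ x, Q 0 (Fin.last N) x x)
    + ∑ i : Fin (N + 1), ∑ x, ∑ y, (if x ≠ y then Q i i x y else 0)
    + ∑ i : Fin N, ∑ x, ∑ y, (if x ≠ y then Q i.succ i.castSucc x y else 0)

theorem abs_sub_half_le_of_chain {w δ : ℕ → ℝ} {n m : ℕ} {t : ℝ}
    (hstep : ∀ k < n, |w k - w (k + 1)| ≤ δ k) (hclose : |w 0 + w n - 1| ≤ t) (hm : m ≤ n) :
    |w m - 1 / 2| ≤ 1 / 2 * (t + ∑ k ∈ range n, δ k) := by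
  have hlink : ∀ {i j}, i ≤ j → j ≤ n → |w i - w j| ≤ ∑ k ∈ Ico i j, δ k := fun hij hjn => by
    simpa only [Real.dist_eq] using
      dist_le_Ico_sum_of_dist_le (f := w) hij fun _ hk => by
        simpa only [Real.dist_eq] using hstep _ (hk.trans_le hjn)
  have h0m := hlink (Nat.zero_le m) hm
  have hmn := hlink hm le_rfl
  rw [range_eq_Ico, ← sum_Ico_consecutive δ (Nat.zero_le m) hm]
  rw [abs_le] at h0m hmn hclose ⊢
  constructor <;> linarith [h0m.1, h0m.2, hmn.1, hmn.2, hclose.1, hclose.2]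

def interleave {α : Type*} (f g : ℕ → α) (k : ℕ) : α :=
  if Even k then f (k / 2) else g (k / 2)

section Interleave

variable {α : Type*} (f g : ℕ → α)

@[simp]
theorem interleave_two_mul (i : ℕ) : interleave f g (2 * i) = f i := by
  simp [interleave]

@[simp]
theorem interleave_two_mul_add_one (i : ℕ) : interleave f g (2 * i + 1) = g i := by
  simp [interleave, Nat.add_div]

theorem sum_range_two_mul_interleave [AddCommMonoid α] (n : ℕ) :
    ∑ k ∈ range (2 * n), interleave f g k = ∑ i ∈ range n, (f i + g i) := by
  induction n with
  | zero => simp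
  | succ n ih =>
    rw [mul_add, mul_one, sum_range_succ, sum_range_succ, sum_range_succ, ih,
      interleave_two_mul, interleave_two_mul_add_one, add_assoc]

end Interleave

section Outcomes

variable {ξ : Type*} [Fintype ξ] [DecidableEq ξ]

def offDiagSum (q : ξ → ξ → ℝ) : ℝ :=
  ∑ x, ∑ y, if x ≠ y then q x y else 0

theorem sum_eq_add_sum_ne {M : Type*} [AddCommMonoid M] (f : ξ → M) (x : ξ) :
    ∑ y, f y = f x + ∑ y, if x ≠ y then f y else 0 := by
  rw [Fintype.sum_eq_add_sum_compl x, sum_ite, sum_const_zero, add_zero]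
  congr 2
  ext y
  simp [eq_comm]

-- Both marginals at `x` lie between `q x x` and `q x x + offDiagSum q`.
theorem abs_sum_sub_sum_le_offDiagSum (q : ξ → ξ → ℝ) (hq : ∀ x y, 0 ≤ q x y) (x : ξ) :
    |∑ y, q x y - ∑ y, q y x| ≤ offDiagSum q := by
  have hrow : ∀ x', 0 ≤ ∑ y, if x' ≠ y then q x' y else 0 := fun x' =>
    sum_nonneg fun y _ => ite_nonneg (hq x' y) le_rfl
  have hcol : ∀ y, 0 ≤ ∑ x', if x' ≠ y then q x' y else 0 := fun y =>
    sum_nonneg fun x' _ => ite_nonneg (hq x' y) le_rfl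
  have hrow_le : (∑ y, if x ≠ y then q x y else 0) ≤ offDiagSum q :=
    single_le_sum (fun x' _ => hrow x') (mem_univ x)
  have hcol_le : (∑ y, if x ≠ y then q y x else 0) ≤ offDiagSum q := by
    rw [offDiagSum, sum_comm]
    simpa only [ne_comm] using single_le_sum (fun y _ => hcol y) (mem_univ x)
  have hcol_nonneg : 0 ≤ ∑ y, if x ≠ y then q y x else 0 := by
    simpa only [ne_comm] using hcol x
  rw [sum_eq_add_sum_ne (q x) x, sum_eq_add_sum_ne (q · x) x, abs_le]
  constructor <;> linarith [hrow x]

end Outcomes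

theorem abs_sum_add_sum_sub_one_le_sum_diag (q : Fin 2 → Fin 2 → ℝ) (hq : ∀ x y, 0 ≤ q x y)
    (hq1 : ∑ x, ∑ y, q x y = 1) (x : Fin 2) :
    |∑ y, q x y + ∑ y, q y x - 1| ≤ ∑ x, q x x := by
  simp only [Fin.sum_univ_two] at hq1 ⊢
  rw [abs_le]
  fin_cases x <;> constructor <;> simp <;> linarith [hq 0 0, hq 0 1, hq 1 0, hq 1 1]

structure IsNonsignallingBox {α β ξ υ : Type*} [Fintype ξ] [Fintype υ]
    (q : α → β → ξ → υ → ℝ) : Prop where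
  nonneg : ∀ a b x y, 0 ≤ q a b x y
  sum_eq_one : ∀ a b, ∑ x, ∑ y, q a b x y = 1
  fst_marginal_eq : ∀ a b b' x, ∑ y, q a b x y = ∑ y, q a b' x y
  snd_marginal_eq : ∀ a a' b y, ∑ x, q a b x y = ∑ x, q a' b x y

section Normalize

variable {α β ξ υ : Type*} [Fintype ξ] [Fintype υ] {p : α → β → ξ → υ → ℝ}

theorem sum_sum_eq_of_marginal_eq (hX : ∀ a b b' x, ∑ y, p a b x y = ∑ y, p a b' x y)
    (hY : ∀ a a' b y, ∑ x, p a b x y = ∑ x, p a' b x y) (a a' : α) (b b' : β) :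
    ∑ x, ∑ y, p a b x y = ∑ x, ∑ y, p a' b' x y := by
  rw [sum_congr rfl fun x _ => hX a b b' x, sum_comm, sum_congr rfl fun y _ => hY a a' b' y,
    sum_comm]

theorem isNonsignallingBox_div_sum (h0 : ∀ a b x y, 0 ≤ p a b x y)
    (hX : ∀ a b b' x, ∑ y, p a b x y = ∑ y, p a b' x y)
    (hY : ∀ a a' b y, ∑ x, p a b x y = ∑ x, p a' b x y)
    (hpos : ∀ a b, 0 < ∑ x, ∑ y, p a b x y) :
    IsNonsignallingBox fun a b x y => p a b x y / ∑ x', ∑ y', p a b x' y' where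
  nonneg a b x y := div_nonneg (h0 a b x y) (hpos a b).le
  sum_eq_one a b := by simp only [← sum_div]; exact div_self (hpos a b).ne'
  fst_marginal_eq a b b' x := by
    simp only [← sum_div]; rw [hX a b b' x, sum_sum_eq_of_marginal_eq hX hY a a b b']
  snd_marginal_eq a a' b y := by
    simp only [← sum_div]; rw [hY a a' b y, sum_sum_eq_of_marginal_eq hX hY a a' b b]

end Normalize

section ChainedBell

-- The cast `ℕ → Fin (N + 1)` reduces mod `N + 1`; below it is only applied to indices `≤ N`.
open Fin.NatCast

theorem chainedBell_eq_sum_interleave {N : ℕ}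
    (Q : Fin (N + 1) → Fin (N + 1) → Fin 2 → Fin 2 → ℝ) :
    chainedBell Q = ∑ x, Q 0 (Fin.last N) x x + ∑ k ∈ range (2 * N + 1),
      interleave (fun i => offDiagSum (Q i i)) (fun i => offDiagSum (Q (i + 1) i)) k := by
  rw [sum_range_succ, sum_range_two_mul_interleave, interleave_two_mul, sum_add_distrib,
    add_right_comm, ← sum_range_succ (fun i => offDiagSum (Q i i)), ← Fin.sum_univ_eq_sum_range,
    ← Fin.sum_univ_eq_sum_range, chainedBell]
  simp only [Fin.cast_val_eq_self, Fin.coe_eq_castSucc, Fin.coeSucc_eq_succ, offDiagSum]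
  ring

theorem IsNonsignallingBox.abs_sum_sub_half_le_chainedBell {N : ℕ}
    {q : Fin (N + 1) → Fin (N + 1) → Fin 2 → Fin 2 → ℝ} (hq : IsNonsignallingBox q)
    (a b : Fin (N + 1)) (x : Fin 2) :
    |∑ y, q a b x y - 1 / 2| ≤ 1 / 2 * chainedBell q := by
  set w : ℕ → ℝ := interleave (fun i => ∑ y, q i i x y) (fun i => ∑ y, q i i y x)
  have hstep : ∀ k < 2 * N + 1, |w k - w (k + 1)| ≤
      interleave (fun i => offDiagSum (q i i)) (fun i => offDiagSum (q (i + 1) i)) k := by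
    intro k hk
    obtain ⟨i, rfl | rfl⟩ := Nat.even_or_odd' k
    · simpa [w] using abs_sum_sub_sum_le_offDiagSum (q i i) (hq.nonneg i i) x
    · rw [show 2 * i + 1 + 1 = 2 * (i + 1) by ring]
      simp only [w, interleave_two_mul, interleave_two_mul_add_one, Nat.cast_succ]
      rw [abs_sub_comm, hq.fst_marginal_eq _ _ i, hq.snd_marginal_eq _ (i + 1)]
      exact abs_sum_sub_sum_le_offDiagSum _ (hq.nonneg _ _) x
  have hclose : |w 0 + w (2 * N + 1) - 1| ≤ ∑ x, q 0 (Fin.last N) x x := by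
    have hw0 : w 0 = ∑ y, q 0 (Fin.last N) x y := by
      simpa [w, interleave] using hq.fst_marginal_eq 0 0 (Fin.last N) x
    simp only [hw0, w, interleave_two_mul_add_one, Fin.natCast_eq_last]
    rw [hq.snd_marginal_eq _ 0]
    exact abs_sum_add_sum_sub_one_le_sum_diag _ (hq.nonneg _ _) (hq.sum_eq_one _ _) x
  have := abs_sub_half_le_of_chain hstep hclose (m := 2 * a) (by omega)
  rwa [show w (2 * a) = _ from interleave_two_mul _ _ _, Fin.cast_val_eq_self,
    hq.fst_marginal_eq a a b, ← chainedBell_eq_sum_interleave] at this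

end ChainedBell

theorem nonsignalling_conditional_nearly_uniform_general
    {N : ℕ} {γ ζ : Type*}
    (P : Fin (N + 1) → Fin (N + 1) → γ → Fin 2 → Fin 2 → ζ → ℝ)
    (hP0 : ∀ a b c x y z, 0 ≤ P a b c x y z)
    -- non-signalling: P_{XZ|ABC} = P_{XZ|AC}
    (hNS2 : ∀ a b b' c x z, ∑ y, P a b c x y z = ∑ y, P a b' c x y z)
    -- non-signalling: P_{YZ|ABC} = P_{YZ|BC}
    (hNS3 : ∀ a a' b c y z, ∑ x, P a b c x y z = ∑ x, P a' b c x y z) :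
    ∀ (c : γ) (z : ζ), (∀ a b, 0 < ∑ x, ∑ y, P a b c x y z) →
      ∀ a b x,
        |(∑ y, P a b c x y z) / (∑ x', ∑ y, P a b c x' y z) - 1 / 2| ≤
          (1 / 2) *
            chainedBell (fun a' b' x' y' =>
              P a' b' c x' y' z / (∑ x'', ∑ y'', P a' b' c x'' y'' z)) := by
  intro c z hpos a b x
  have hbox := isNonsignallingBox_div_sum (p := fun a b x y => P a b c x y z)
    (fun a b x y => hP0 a b c x y z) (fun a b b' x => hNS2 a b b' c x z)
    (fun a a' b y => hNS3 a a' b c y z) hpos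
  rw [sum_div]
  exact hbox.abs_sum_sub_half_le_chainedBell a b x

/-- For a non-signalling extension `P_{XYZ|ABC}` of a chained-Bell distribution,
the conditional distribution of `X` given `a, b, c, z` is close to uniform:
`|P_{X|abcz}(x) − 1/2| ≤ (1/2)·I_N(P_{XY|AB,cz})`. -/
theorem nonsignalling_conditional_nearly_uniform
    {N : ℕ} {γ ζ : Type*} [Fintype γ] [Fintype ζ]
    (P : Fin (N + 1) → Fin (N + 1) → γ → Fin 2 → Fin 2 → ζ → ℝ)
    (hP0 : ∀ a b c x y z, 0 ≤ P a b c x y z)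
    (hP1 : ∀ a b c, ∑ x, ∑ y, ∑ z, P a b c x y z = 1)
    -- non-signalling: P_{XY|ABC} = P_{XY|AB}
    (hNS1 : ∀ a b c c' x y, ∑ z, P a b c x y z = ∑ z, P a b c' x y z)
    -- non-signalling: P_{XZ|ABC} = P_{XZ|AC}
    (hNS2 : ∀ a b b' c x z, ∑ y, P a b c x y z = ∑ y, P a b' c x y z)
    -- non-signalling: P_{YZ|ABC} = P_{YZ|BC}
    (hNS3 : ∀ a a' b c y z, ∑ x, P a b c x y z = ∑ x, P a' b c x y z) :
    ∀ (c : γ) (z : ζ), (∀ a b, 0 < ∑ x, ∑ y, P a b c x y z) →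
      ∀ a b x,
        |(∑ y, P a b c x y z) / (∑ x', ∑ y, P a b c x' y z) - 1 / 2| ≤
          (1 / 2) *
            chainedBell (fun a' b' x' y' =>
              P a' b' c x' y' z / (∑ x'', ∑ y'', P a' b' c x'' y'' z)) :=
  nonsignalling_conditional_nearly_uniform_general P hP0 hNS2 hNS3
end

section
/- Chained Bell inequality non-signalling privacy bound: let P_{XYZ|ABC} be a non-signalling conditional distribution with X, Y binary, A ∈ {0,2,...,2N−2}, B ∈ {1,3,...,2N−1}, and define I_N := P(X=Y|A=0,B=2N−1) + ∑_{|a−b|=1} P(X≠Y|A=a,B=b). Then for all a, b, c, x (with positive probability), D(P_{Z|abcx}, P_{Z|abc}) ≤ I_N. -/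
/-!
Fix Eve's input `c`. By non-signalling, Alice's marginal `P_{XZ|a}(x, ·)` does not depend on `b`
and Bob's marginal `P_{YZ|b}(y, ·)` does not depend on `a`. For each pair of neighbouring settings
the marginals `P_{XZ}(x, ·)` and `P_{YZ}(x, ·)` are `ℓ¹`-close up to `P(X ≠ Y | a, b)`, and for the
end pair (`A = 0`, `B` maximal) the marginals `P_{YZ}(x, ·)` and `P_{XZ}(1 - x, ·)` are close up to
`P(X = Y | a, b)`. Going once around the chain from `P_{XZ|a}(x, ·)` to `P_{XZ|a}(1 - x, ·)` uses
every pair exactly once, so these two are `I_N`-close; and conditioning on `X = x` moves `P_{Z|a}`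
by at most their `ℓ¹` distance.
-/

open Finset

/-- Variational distance between two distributions on a finite alphabet. -/
noncomputable def varDist {α : Type*} [Fintype α] (p q : α → ℝ) : ℝ :=
  (1 / 2) * ∑ a, |p a - q a|

theorem Fin.sum_univ_two_eq_add_add_one {M : Type*} [AddCommMonoid M] (h : Fin 2 → M) (x : Fin 2) :
    ∑ x', h x' = h x + h (x + 1) := by
  fin_cases x <;> simp [Fin.sum_univ_two, add_comm]

section L1Dist

variable {ζ : Type*} [Fintype ζ]

noncomputable def l1Dist (u v : ζ → ℝ) : ℝ := ∑ z, |u z - v z|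

theorem l1Dist_comm (u v : ζ → ℝ) : l1Dist u v = l1Dist v u := by
  simp only [l1Dist, abs_sub_comm]

theorem l1Dist_triangle (u v w : ζ → ℝ) : l1Dist u w ≤ l1Dist u v + l1Dist v w := by
  rw [l1Dist, l1Dist, l1Dist, ← sum_add_distrib]
  exact sum_le_sum fun z _ => abs_sub_le _ _ _

theorem l1Dist_le_sum_Ico (f : ℕ → ζ → ℝ) {j k : ℕ} (hjk : j ≤ k) :
    l1Dist (f j) (f k) ≤ ∑ i ∈ Ico j k, l1Dist (f i) (f (i + 1)) := by
  simp only [l1Dist]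
  rw [sum_comm]
  refine sum_le_sum fun z _ => ?_
  simpa only [Real.dist_eq] using dist_le_Ico_sum_dist (fun i => f i z) hjk

theorem l1Dist_le_sum_Ico_of_zigzag (f g : ℕ → ζ → ℝ) (E F : ℕ → ℝ) {j k : ℕ} (hjk : j ≤ k)
    (hE : ∀ i ∈ Ico j k, l1Dist (f i) (g i) ≤ E i)
    (hF : ∀ i ∈ Ico j k, l1Dist (g i) (f (i + 1)) ≤ F i) :
    l1Dist (f j) (f k) ≤ ∑ i ∈ Ico j k, (E i + F i) :=
  (l1Dist_le_sum_Ico f hjk).trans <| sum_le_sum fun i hi =>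
    (l1Dist_triangle _ (g i) _).trans (add_le_add (hE i hi) (hF i hi))

theorem l1Dist_le_of_zigzag_loop (f g f' g' : ℕ → ζ → ℝ) (E F : ℕ → ℝ) (T : ℝ) {j N : ℕ}
    (hj : j ≤ N) (hE : ∀ i ≤ N, l1Dist (f i) (g i) ≤ E i)
    (hF : ∀ i < N, l1Dist (g i) (f (i + 1)) ≤ F i) (hE' : ∀ i ≤ N, l1Dist (f' i) (g' i) ≤ E i)
    (hF' : ∀ i < N, l1Dist (g' i) (f' (i + 1)) ≤ F i) (hT : l1Dist (g N) (f' 0) ≤ T) :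
    l1Dist (f j) (f' j) ≤ T + ∑ i ∈ range (N + 1), E i + ∑ i ∈ range N, F i := by
  have hup := l1Dist_le_sum_Ico_of_zigzag f g E F hj
    (fun i hi => hE i (mem_Ico.1 hi).2.le) (fun i hi => hF i (mem_Ico.1 hi).2)
  have hdown := l1Dist_le_sum_Ico_of_zigzag f' g' E F (Nat.zero_le j)
    (fun i hi => hE' i (by have := (mem_Ico.1 hi).2; omega))
    (fun i hi => hF' i (by have := (mem_Ico.1 hi).2; omega))
  have hsplit : ∑ i ∈ Ico 0 j, (E i + F i) + ∑ i ∈ Ico j N, (E i + F i)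
      = ∑ i ∈ range N, E i + ∑ i ∈ range N, F i := by
    rw [sum_Ico_consecutive _ (Nat.zero_le _) hj, ← range_eq_Ico, sum_add_distrib]
  rw [sum_range_succ]
  linarith [l1Dist_triangle (f j) (f N) (g N), l1Dist_triangle (f j) (g N) (f' 0),
    l1Dist_triangle (f j) (f' 0) (f' j), hE N le_rfl]

theorem varDist_div_sum_le_l1Dist (u v : ζ → ℝ) (hu : ∀ z, 0 ≤ u z) (hp : 0 < ∑ z, u z)
    (hsum : ∑ z, (u z + v z) = 1) :
    varDist (fun z => u z / ∑ z', u z') (fun z => u z + v z) ≤ l1Dist u v := by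
  set p := ∑ z, u z
  set q := ∑ z, v z
  have hq : q = 1 - p := by rw [sum_add_distrib] at hsum; linarith
  have hpq : |p - q| ≤ l1Dist u v := by
    rw [← sum_sub_distrib]; exact abs_sum_le_sum_abs _ _
  have hpoint : ∀ z, |u z / p - (u z + v z)| ≤ |u z - v z| + |p - q| / p * u z := by
    intro z
    have : u z / p - (u z + v z) = (u z - v z) + (q - p) / p * u z := by
      rw [hq]; field_simp; ring
    rw [this]
    refine (abs_add_le _ _).trans (add_le_add_right ?_ _)
    rw [abs_mul, abs_div, abs_of_pos hp, abs_of_nonneg (hu z), abs_sub_comm]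
  calc varDist (fun z => u z / p) (fun z => u z + v z)
      ≤ 1 / 2 * (l1Dist u v + |p - q|) := by
        rw [varDist]
        gcongr
        refine (sum_le_sum fun z _ => hpoint z).trans_eq ?_
        rw [sum_add_distrib, ← mul_sum, div_mul_cancel₀ _ hp.ne', l1Dist]
    _ ≤ l1Dist u v := by linarith

def offDiagMass {α : Type*} [Fintype α] [DecidableEq α] (q : α → α → ℝ) : ℝ :=
  ∑ x, ∑ y, if x ≠ y then q x y else 0

theorem abs_sum_sub_sum_le_offDiagMass {α : Type*} [Fintype α] [DecidableEq α]
    (r : α → α → ℝ) (hr : ∀ x y, 0 ≤ r x y) (x : α) :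
    |∑ y, r x y - ∑ x', r x' x| ≤ offDiagMass r := by
  set row := ∑ y ∈ univ.erase x, r x y
  set col := ∑ x' ∈ univ.erase x, r x' x
  have hrow : ∑ y, r x y = r x x + row := (add_sum_erase _ _ (mem_univ x)).symm
  have hcol : ∑ x', r x' x = r x x + col := (add_sum_erase _ _ (mem_univ x)).symm
  have hrow0 : 0 ≤ row := sum_nonneg fun _ _ => hr _ _
  have hcol0 : 0 ≤ col := sum_nonneg fun _ _ => hr _ _
  have hmass : row + col ≤ offDiagMass r := by
    rw [offDiagMass, ← add_sum_erase _ _ (mem_univ x)]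
    refine add_le_add (le_of_eq ?_) (sum_le_sum fun x' hx' => ?_)
    · rw [← sum_filter, filter_ne]
    · calc r x' x = if x' ≠ x then r x' x else 0 := (if_pos (ne_of_mem_erase hx')).symm
        _ ≤ ∑ y, if x' ≠ y then r x' y else 0 :=
          single_le_sum (f := fun y => if x' ≠ y then r x' y else 0)
            (fun y _ => by split_ifs <;> simp [hr]) (mem_univ x)
  rw [hrow, hcol, add_sub_add_left_eq_sub, abs_sub_le_iff]
  constructor <;> linarith

/-- For a joint distribution `R` of `(X, Y, Z)`, the events `X = x` and `Y = x` differ only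
where `X ≠ Y`. -/
theorem l1Dist_marginals_le_offDiagMass {α : Type*} [Fintype α] [DecidableEq α]
    (R : α → α → ζ → ℝ) (hR : ∀ x y z, 0 ≤ R x y z) (x : α) :
    l1Dist (fun z => ∑ y, R x y z) (fun z => ∑ x', R x' x z)
      ≤ offDiagMass (fun x' y => ∑ z, R x' y z) :=
  calc l1Dist (fun z => ∑ y, R x y z) (fun z => ∑ x', R x' x z)
      ≤ ∑ z, offDiagMass (fun x' y => R x' y z) :=
        sum_le_sum fun z _ => abs_sum_sub_sum_le_offDiagMass _ (fun x' y => hR x' y z) x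
    _ = offDiagMass (fun x' y => ∑ z, R x' y z) := by
      simp only [offDiagMass, ite_sum_zero]
      rw [sum_comm]
      exact sum_congr rfl fun _ _ => sum_comm

theorem l1Dist_marginals_flip_le_diag (R : Fin 2 → Fin 2 → ζ → ℝ) (hR : ∀ x y z, 0 ≤ R x y z)
    (x : Fin 2) :
    l1Dist (fun z => ∑ x', R x' x z) (fun z => ∑ y, R (x + 1) y z) ≤ ∑ x', ∑ z, R x' x' z := by
  have hpoint : ∀ z, |∑ x', R x' x z - ∑ y, R (x + 1) y z| ≤ ∑ x', R x' x' z := by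
    intro z
    have hx : x + 1 + 1 = x := by fin_cases x <;> rfl
    rw [Fin.sum_univ_two_eq_add_add_one (fun x' => R x' x z) x,
      Fin.sum_univ_two_eq_add_add_one (fun y => R (x + 1) y z) (x + 1), hx,
      Fin.sum_univ_two_eq_add_add_one (fun x' => R x' x' z) x, abs_le]
    constructor <;> linarith [hR x x z, hR (x + 1) (x + 1) z]
  rw [sum_comm]
  exact sum_le_sum fun z _ => hpoint z

end L1Dist

section ChainedBell

open Fin.NatCast

variable {N : ℕ}

theorem chainedBell_eq_sum_range (Q : Fin (N + 1) → Fin (N + 1) → Fin 2 → Fin 2 → ℝ) :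
    chainedBell Q = ∑ x, Q 0 (Fin.last N) x x + ∑ i ∈ range (N + 1), offDiagMass (Q i i)
      + ∑ i ∈ range N, offDiagMass (Q ↑(i + 1) i) := by
  have hsucc : ∀ i : Fin N, ((i.val + 1 : ℕ) : Fin (N + 1)) = i.succ := fun i => by
    rw [Nat.cast_succ, Fin.coe_eq_castSucc, Fin.coeSucc_eq_succ]
  rw [← Fin.sum_univ_eq_sum_range, ← Fin.sum_univ_eq_sum_range]
  simp only [chainedBell, offDiagMass, Fin.cast_val_eq_self, hsucc, Fin.coe_eq_castSucc]

variable {ζ : Type*} [Fintype ζ] (R : Fin (N + 1) → Fin (N + 1) → Fin 2 → Fin 2 → ζ → ℝ)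

theorem l1Dist_marginals_le_chainedBell (hR : ∀ a b x y z, 0 ≤ R a b x y z)
    (hA : ∀ a b b' x z, ∑ y, R a b x y z = ∑ y, R a b' x y z)
    (hB : ∀ a a' b y z, ∑ x, R a b x y z = ∑ x, R a' b x y z) (a b : Fin (N + 1)) (x : Fin 2) :
    l1Dist (fun z => ∑ y, R a b x y z) (fun z => ∑ y, R a b (x + 1) y z)
      ≤ chainedBell (fun a b x y => ∑ z, R a b x y z) := by
  set Q : Fin (N + 1) → Fin (N + 1) → Fin 2 → Fin 2 → ℝ := fun a b x y => ∑ z, R a b x y z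
  -- Alice's and Bob's marginals at the `i`-th settings; non-signalling makes the other setting moot.
  set f : Fin 2 → ℕ → ζ → ℝ := fun x i z => ∑ y, R i i x y z
  set g : Fin 2 → ℕ → ζ → ℝ := fun x i z => ∑ x', R i i x' x z
  set E : ℕ → ℝ := fun i => offDiagMass (Q i i)
  set F : ℕ → ℝ := fun i => offDiagMass (Q ↑(i + 1) i)
  set T : ℝ := ∑ x, Q 0 (Fin.last N) x x
  have hE : ∀ x i, l1Dist (f x i) (g x i) ≤ E i := fun x i =>
    l1Dist_marginals_le_offDiagMass _ (hR _ _) x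
  have hF : ∀ x i, l1Dist (g x i) (f x (i + 1)) ≤ F i := by
    intro x i
    have hg : g x i = fun z => ∑ x', R ↑(i + 1) i x' x z := funext fun z => hB _ _ _ _ _
    have hf : f x (i + 1) = fun z => ∑ y, R ↑(i + 1) i x y z := funext fun z => hA _ _ _ _ _
    rw [hg, hf, l1Dist_comm]
    exact l1Dist_marginals_le_offDiagMass _ (hR _ _) x
  have hT : ∀ x, l1Dist (g x N) (f (x + 1) 0) ≤ T := by
    intro x
    have hg : g x N = fun z => ∑ x', R 0 (Fin.last N) x' x z := by
      funext z; rw [← Fin.natCast_eq_last]; exact hB _ _ _ _ _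
    have hf : f (x + 1) 0 = fun z => ∑ y, R 0 (Fin.last N) (x + 1) y z := by
      funext z; simp only [f, Nat.cast_zero]; exact hA _ _ _ _ _
    rw [hg, hf]
    exact l1Dist_marginals_flip_le_diag _ (hR _ _) x
  have hstart : ∀ x, (fun z => ∑ y, R a b x y z) = f x a.val := fun x => by
    funext z; simp only [f, Fin.cast_val_eq_self]; exact hA _ _ _ _ _
  rw [hstart, hstart, chainedBell_eq_sum_range]
  exact l1Dist_le_of_zigzag_loop (f x) (g x) (f (x + 1)) (g (x + 1)) E F T a.is_le
    (fun i _ => hE x i) (fun i _ => hF x i) (fun i _ => hE (x + 1) i) (fun i _ => hF (x + 1) i)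
    (hT x)

end ChainedBell

theorem nonsignalling_chained_bell_privacy_bound_general
    {N : ℕ} {γ ζ : Type*} [Fintype ζ]
    (P : Fin (N + 1) → Fin (N + 1) → γ → Fin 2 → Fin 2 → ζ → ℝ)
    (hP0 : ∀ a b c x y z, 0 ≤ P a b c x y z)
    (hP1 : ∀ a b c, ∑ x, ∑ y, ∑ z, P a b c x y z = 1)
    -- non-signalling: P_{XZ|ABC} = P_{XZ|AC}
    (hNS2 : ∀ a b b' c x z, ∑ y, P a b c x y z = ∑ y, P a b' c x y z)
    -- non-signalling: P_{YZ|ABC} = P_{YZ|BC}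
    (hNS3 : ∀ a a' b c y z, ∑ x, P a b c x y z = ∑ x, P a' b c x y z) :
    ∀ a b c x, (0 < ∑ y, ∑ z, P a b c x y z) →
      varDist
        (fun z => (∑ y, P a b c x y z) / (∑ y, ∑ z', P a b c x y z'))
        (fun z => ∑ x', ∑ y, P a b c x' y z) ≤
      chainedBell (fun a' b' x' y' => ∑ z, P a' b' c x' y' z) := by
  intro a b c x hpos
  set u : ζ → ℝ := fun z => ∑ y, P a b c x y z
  set v : ζ → ℝ := fun z => ∑ y, P a b c (x + 1) y z
  have hden : ∑ y, ∑ z, P a b c x y z = ∑ z, u z := sum_comm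
  have hmarg : (fun z => ∑ x', ∑ y, P a b c x' y z) = fun z => u z + v z :=
    funext fun z => Fin.sum_univ_two_eq_add_add_one _ x
  have hsum : ∑ z, (u z + v z) = 1 :=
    calc ∑ z, (u z + v z) = ∑ z, ∑ x', ∑ y, P a b c x' y z :=
          sum_congr rfl fun z _ => (congrFun hmarg z).symm
      _ = ∑ x', ∑ y, ∑ z, P a b c x' y z := by
          rw [sum_comm]; exact sum_congr rfl fun _ _ => sum_comm
      _ = 1 := hP1 a b c
  rw [hmarg, hden]
  calc _ ≤ l1Dist u v :=
        varDist_div_sum_le_l1Dist u v (fun z => sum_nonneg fun y _ => hP0 _ _ _ _ _ _)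
          (hden ▸ hpos) hsum
    _ ≤ _ := l1Dist_marginals_le_chainedBell (fun a b => P a b c) (fun a b => hP0 a b c)
        (fun a b b' => hNS2 a b b' c) (fun a a' b => hNS3 a a' b c) a b x

/-- Chained Bell inequality non-signalling privacy bound: for any non-signalling
conditional distribution `P_{XYZ|ABC}` with binary `X, Y` and chained-Bell settings,
`D(P_{Z|abcx}, P_{Z|abc}) ≤ I_N(P_{XY|AB})` for all `a, b, c, x` with positive
probability. -/
theorem nonsignalling_chained_bell_privacy_bound
    {N : ℕ} {γ ζ : Type*} [Fintype γ] [Fintype ζ]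
    (P : Fin (N + 1) → Fin (N + 1) → γ → Fin 2 → Fin 2 → ζ → ℝ)
    (hP0 : ∀ a b c x y z, 0 ≤ P a b c x y z)
    (hP1 : ∀ a b c, ∑ x, ∑ y, ∑ z, P a b c x y z = 1)
    -- non-signalling: P_{XY|ABC} = P_{XY|AB}
    (hNS1 : ∀ a b c c' x y, ∑ z, P a b c x y z = ∑ z, P a b c' x y z)
    -- non-signalling: P_{XZ|ABC} = P_{XZ|AC}
    (hNS2 : ∀ a b b' c x z, ∑ y, P a b c x y z = ∑ y, P a b' c x y z)
    -- non-signalling: P_{YZ|ABC} = P_{YZ|BC}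
    (hNS3 : ∀ a a' b c y z, ∑ x, P a b c x y z = ∑ x, P a' b c x y z) :
    ∀ a b c x, (0 < ∑ y, ∑ z, P a b c x y z) →
      varDist
        (fun z => (∑ y, P a b c x y z) / (∑ y, ∑ z', P a b c x y z'))
        (fun z => ∑ x', ∑ y, P a b c x' y z) ≤
      chainedBell (fun a' b' x' y' => ∑ z, P a' b' c x' y' z) :=
  nonsignalling_chained_bell_privacy_bound_general P hP0 hP1 hNS2 hNS3
end

section
/- For the chained Bell measurements on a maximally entangled two-qubit state, the quantum value of I_N satisfies I_N = 2N sin²(π/(4N)), which is at most π²/(8N); consequently I_N → 0 as N → ∞. -/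
/-!
Since `(2N - 1)π/(4N) = π/2 - π/(4N)`, the closing term `cos²((2N-1)π/(4N))` equals
`sin²(π/(4N))`, so all `2N` terms of `I_N` coincide. The bound follows from `sin² x ≤ x²`,
and `π²/(8N) → 0` squeezes `I_N` to `0`.
-/

open Real Filter

lemma two_mul_sub_one_mul_pi_div_four_mul {x : ℝ} (hx : x ≠ 0) :
    (2 * x - 1) * π / (4 * x) = π / 2 - π / (4 * x) := by
  field_simp
  ring

lemma cos_sq_two_mul_sub_one_mul_pi_div_four_mul {x : ℝ} (hx : x ≠ 0) :
    cos ((2 * x - 1) * π / (4 * x)) ^ 2 = sin (π / (4 * x)) ^ 2 := by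
  rw [two_mul_sub_one_mul_pi_div_four_mul hx, cos_pi_div_two_sub]

lemma two_mul_mul_sin_sq_pi_div_four_mul_le {x : ℝ} (hx : 0 ≤ x) :
    2 * x * sin (π / (4 * x)) ^ 2 ≤ π ^ 2 / (8 * x) :=
  calc 2 * x * sin (π / (4 * x)) ^ 2
      ≤ 2 * x * (π / (4 * x)) ^ 2 := mul_le_mul_of_nonneg_left sin_sq_le_sq (by positivity)
    _ = π ^ 2 / (8 * x) := by
      rcases hx.eq_or_lt with rfl | hx
      · simp
      · field_simp; ring

lemma tendsto_pi_sq_div_eight_mul_nat :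
    Tendsto (fun N : ℕ => π ^ 2 / (8 * (N : ℝ))) atTop (nhds 0) :=
  tendsto_const_nhds.div_atTop <|
    tendsto_natCast_atTop_atTop.const_mul_atTop (by norm_num)

/-- For the chained Bell measurements on a maximally entangled two-qubit state,
the quantum value of `I_N` equals `2N sin²(π/(4N))`
(the closing term is `cos²((2N−1)π/(4N))` and each of the `2N−1` terms with
`|a−b| = 1` is `sin²(π/(4N))`), which is at most `π²/(8N)`; consequently
`I_N → 0` as `N → ∞`. -/
theorem chained_bell_quantum_value :
    (∀ N : ℕ, 1 ≤ N →
      cos ((2 * N - 1) * π / (4 * N)) ^ 2 + (2 * N - 1) * sin (π / (4 * N)) ^ 2 =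
        2 * N * sin (π / (4 * N)) ^ 2) ∧
    (∀ N : ℕ, 1 ≤ N → 2 * N * sin (π / (4 * N)) ^ 2 ≤ π ^ 2 / (8 * N)) ∧
    Tendsto (fun N : ℕ => 2 * N * sin (π / (4 * N)) ^ 2) atTop (nhds 0) := by
  refine ⟨fun N hN => ?_, fun N _ => two_mul_mul_sin_sq_pi_div_four_mul_le N.cast_nonneg, ?_⟩
  · have hN : (N : ℝ) ≠ 0 := by positivity
    rw [cos_sq_two_mul_sub_one_mul_pi_div_four_mul hN]
    ring
  · exact squeeze_zero (fun N => by positivity)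
      (fun N => two_mul_mul_sin_sq_pi_div_four_mul_le N.cast_nonneg)
      tendsto_pi_sq_div_eight_mul_nat
end

section
/- For any probability distribution P on a finite set S and any ε > 0, there exists N and a probability distribution Q on S × {1,...,N} with marginal on S equal to P such that D(Q, U) ≤ ε, where D denotes variational distance and U is the uniform distribution on a subset of S × {1,...,N}. -/
open Finset

lemma fin_count_lt (N m : ℕ) (h : m ≤ N) :
    ∑ i ∈ range N, (if i < m then (1:ℕ) else 0) = m := by
  rw [← Finset.card_filter]
  have : (range N).filter (fun i => i < m) = range m := by
    ext i; simp; omega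
  simp [this]

/-- Any distribution can be refined into an approximately flat one by splitting each
atom into sufficiently many smaller events: for every distribution `P` on a finite set
`S` and every `ε > 0` there are `N ≥ 1` and a distribution `Q` on `S × Fin N` whose
marginal on `S` is `P` and which is `ε`-close (in variational distance) to the uniform
distribution on some nonempty subset of `S × Fin N`. -/
theorem exists_approximately_flat_refinement
    {S : Type*} [Fintype S] [DecidableEq S]
    (P : S → ℝ) (hP0 : ∀ s, 0 ≤ P s) (hP1 : ∑ s, P s = 1)
    (ε : ℝ) (hε : 0 < ε) :
    ∃ (N : ℕ) (_ : 0 < N) (Q : S × Fin N → ℝ) (T : Finset (S × Fin N)),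
      T.Nonempty ∧
      (∀ st, 0 ≤ Q st) ∧ (∑ st, Q st = 1) ∧
      (∀ s, ∑ t, Q (s, t) = P s) ∧
      varDist Q (fun st => if st ∈ T then (T.card : ℝ)⁻¹ else 0) ≤ ε := by
  cases isEmpty_or_nonempty S with
  | inl h => simp at hP1
  | inr h =>
  classical
  set n := Fintype.card S with hn
  have hn1 : 1 ≤ n := Fintype.card_pos
  set N : ℕ := n + ⌈(n:ℝ)/ε⌉₊ + 1 with hNdef
  have hNpos : 0 < N := by omega
  have hNR : (0:ℝ) < N := by exact_mod_cast hNpos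
  have hnN : (n:ℝ) ≤ N * ε := by
    have h1 : (n:ℝ)/ε ≤ ⌈(n:ℝ)/ε⌉₊ := Nat.le_ceil _
    have h2 : (⌈(n:ℝ)/ε⌉₊ : ℝ) ≤ N := by
      have : ⌈(n:ℝ)/ε⌉₊ ≤ N := by omega
      exact_mod_cast this
    have h3 : (n:ℝ) = (n/ε) * ε := by field_simp
    nlinarith
  have hPle : ∀ s, P s ≤ 1 := fun s =>
    hP1 ▸ Finset.single_le_sum (fun i _ => hP0 i) (mem_univ s)
  set k : S → ℕ := fun s => min ⌊(N:ℝ) * P s⌋₊ (N - 1) with hkdef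
  have hkN : ∀ s, k s < N := fun s => lt_of_le_of_lt (min_le_right _ _) (by omega)
  have hk1 : ∀ s, (k s : ℝ) ≤ N * P s := by
    intro s
    have h1 := Nat.floor_le (mul_nonneg hNR.le (hP0 s))
    have h2 : (k s : ℝ) ≤ (⌊(N:ℝ)*P s⌋₊ : ℝ) := by
      exact_mod_cast min_le_left (⌊(N:ℝ) * P s⌋₊) (N-1)
    linarith
  have hk2 : ∀ s, (N:ℝ) * P s ≤ k s + 1 := by
    intro s
    rcases le_or_gt (⌊(N:ℝ) * P s⌋₊) (N-1) with hc | hc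
    · have hks : k s = ⌊(N:ℝ)*P s⌋₊ := min_eq_left hc
      rw [hks]
      exact (Nat.lt_floor_add_one _).le
    · have hks : k s = N - 1 := min_eq_right hc.le
      have hke : (k s : ℝ) + 1 = N := by
        rw [hks]
        have : ((N - 1 : ℕ) : ℝ) = (N : ℝ) - 1 := by
          push_cast [Nat.cast_sub (by omega : 1 ≤ N)]; ring
        rw [this]; ring
      rw [hke]
      nlinarith [hPle s]
  set r : S → ℝ := fun s => P s - k s / N with hrdef
  have hr0 : ∀ s, 0 ≤ r s := by
    intro s
    have : (k s : ℝ) / N ≤ P s := (div_le_iff₀ hNR).mpr (by nlinarith [hk1 s])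
    simpa [hrdef] using sub_nonneg.mpr this
  have hr1 : ∀ s, r s ≤ (N:ℝ)⁻¹ := by
    intro s
    have h1 : P s ≤ ((k s : ℝ) + 1)/N := (le_div_iff₀ hNR).mpr (by nlinarith [hk2 s])
    have h2 : ((k s : ℝ) + 1)/N = (k s : ℝ)/N + (N:ℝ)⁻¹ := by field_simp
    simp only [hrdef]
    linarith
  set Q : S × Fin N → ℝ := fun st =>
    if (st.2 : ℕ) < k st.1 then (N:ℝ)⁻¹ else if (st.2:ℕ) = k st.1 then r st.1 else 0 with hQdef
  have hQ0 : ∀ st, 0 ≤ Q st := by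
    intro st
    simp only [hQdef]
    split
    · positivity
    · split
      · exact hr0 _
      · exact le_refl 0
  have hmarg : ∀ s, ∑ t : Fin N, Q (s, t) = P s := by
    intro s
    have he : ∑ t : Fin N, Q (s, t)
        = ∑ i ∈ range N, (if i < k s then (N:ℝ)⁻¹ else if i = k s then r s else 0) :=
      Fin.sum_univ_eq_sum_range (fun i => if i < k s then (N:ℝ)⁻¹ else if i = k s then r s else 0) N
    rw [he]
    rw [← Finset.sum_subset (Finset.range_subset_range.mpr (hkN s))
        (fun x _ hx => by
          simp only [mem_range, not_lt] at hx
          have h1 : ¬ x < k s := by omega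
          have h2 : ¬ x = k s := by omega
          simp [h1, h2])]
    rw [Finset.sum_range_succ]
    have h3 : ∑ i ∈ range (k s), (if i < k s then (N:ℝ)⁻¹ else if i = k s then r s else 0)
        = (k s : ℝ) * (N:ℝ)⁻¹ := by
      have hcon : ∀ i ∈ range (k s),
          (if i < k s then (N:ℝ)⁻¹ else if i = k s then r s else 0) = (N:ℝ)⁻¹ := by
        intro i hi; simp only [mem_range] at hi; simp [hi]
      rw [Finset.sum_congr rfl hcon, Finset.sum_const, card_range, nsmul_eq_mul]
    rw [h3]
    have h4 : ¬ (k s < k s) := lt_irrefl _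
    simp only [h4, if_false, if_pos rfl, hrdef, ↓reduceIte]
    field_simp
    ring
  have hsum : ∑ st : S × Fin N, Q st = 1 := by
    rw [Fintype.sum_prod_type]
    simp_rw [hmarg]
    exact hP1
  set T : Finset (S × Fin N) := univ.filter (fun st => (st.2 : ℕ) < k st.1) with hTdef
  have hTcard : T.card = ∑ s, k s := by
    rw [hTdef, Finset.card_filter, Fintype.sum_prod_type]
    refine Finset.sum_congr rfl (fun s _ => ?_)
    have he : ∑ t : Fin N, (if (t : ℕ) < k s then (1:ℕ) else 0)
        = ∑ i ∈ range N, (if i < k s then (1:ℕ) else 0) :=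
      Fin.sum_univ_eq_sum_range (fun i => if i < k s then (1:ℕ) else 0) N
    rw [he, fin_count_lt N (k s) (hkN s).le]
  have hcR : (T.card : ℝ) = ∑ s, (k s : ℝ) := by rw [hTcard]; push_cast; rfl
  have hc_le : (T.card : ℝ) ≤ N := by
    rw [hcR]
    calc ∑ s, (k s : ℝ) ≤ ∑ s, (N:ℝ) * P s := Finset.sum_le_sum (fun s _ => hk1 s)
    _ = N := by rw [← Finset.mul_sum, hP1, mul_one]
  have hc_ge : (N:ℝ) - n ≤ T.card := by
    have h5 : (N:ℝ) = ∑ s, (N:ℝ) * P s := by rw [← Finset.mul_sum, hP1, mul_one]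
    have h6 : ∑ s, (N:ℝ) * P s ≤ ∑ s, ((k s : ℝ) + 1) := Finset.sum_le_sum (fun s _ => hk2 s)
    have h7 : ∑ s, ((k s : ℝ) + 1) = (∑ s, (k s : ℝ)) + n := by
      rw [Finset.sum_add_distrib]; simp [hn, Finset.card_univ]
    rw [hcR]; linarith
  have hTpos : 0 < T.card := by
    by_contra hcon
    push_neg at hcon
    interval_cases h : T.card
    · simp at hc_ge
      have : (N:ℝ) ≤ n := by simpa using hc_ge
      have : N ≤ n := by exact_mod_cast this
      omega
  have hcpos : (0:ℝ) < T.card := by exact_mod_cast hTpos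
  have hQT : ∑ st ∈ T, Q st = T.card * (N:ℝ)⁻¹ := by
    rw [Finset.sum_congr rfl (fun st hst => ?_), Finset.sum_const, nsmul_eq_mul]
    have := (Finset.mem_filter.mp (hTdef ▸ hst)).2
    simp only [hQdef]
    rw [if_pos this]
  refine ⟨N, hNpos, Q, T, Finset.card_pos.mp hTpos, hQ0, hsum, hmarg, ?_⟩
  -- variational distance bound
  have hsplit : ∑ st : S × Fin N, |Q st - (if st ∈ T then (T.card:ℝ)⁻¹ else 0)|
      = ∑ st ∈ T, |Q st - (T.card:ℝ)⁻¹| + ∑ st ∈ Tᶜ, |Q st| := by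
    rw [← Finset.sum_add_sum_compl T]
    congr 1
    · exact Finset.sum_congr rfl (fun st hst => by rw [if_pos hst])
    · refine Finset.sum_congr rfl (fun st hst => ?_)
      rw [if_neg (Finset.mem_compl.mp hst), sub_zero]
  have honT : ∑ st ∈ T, |Q st - (T.card:ℝ)⁻¹| = 1 - (T.card : ℝ) * (N:ℝ)⁻¹ := by
    have habs : ∀ st ∈ T, |Q st - (T.card:ℝ)⁻¹| = (T.card:ℝ)⁻¹ - (N:ℝ)⁻¹ := by
      intro st hst
      have hmem := (Finset.mem_filter.mp (hTdef ▸ hst)).2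
      have hQv : Q st = (N:ℝ)⁻¹ := by simp only [hQdef]; rw [if_pos hmem]
      rw [hQv, abs_sub_comm, abs_of_nonneg]
      have := inv_anti₀ hcpos hc_le
      linarith
    rw [Finset.sum_congr rfl habs, Finset.sum_const, nsmul_eq_mul]
    rw [mul_sub, mul_inv_cancel₀ (ne_of_gt hcpos)]
  have hoffT : ∑ st ∈ Tᶜ, |Q st| = 1 - (T.card : ℝ) * (N:ℝ)⁻¹ := by
    have h8 : ∑ st ∈ Tᶜ, |Q st| = ∑ st ∈ Tᶜ, Q st :=
      Finset.sum_congr rfl (fun st _ => abs_of_nonneg (hQ0 st))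
    have h9 : ∑ st ∈ T, Q st + ∑ st ∈ Tᶜ, Q st = 1 := by
      rw [Finset.sum_add_sum_compl]; exact hsum
    rw [h8]; rw [hQT] at h9; linarith
  have hfin : varDist Q (fun st => if st ∈ T then (T.card:ℝ)⁻¹ else 0)
      = 1 - (T.card : ℝ) * (N:ℝ)⁻¹ := by
    rw [varDist, hsplit, honT, hoffT]; ring
  rw [hfin]
  have h10 : 1 - (T.card : ℝ) * (N:ℝ)⁻¹ ≤ (n:ℝ) / N := by
    rw [div_eq_mul_inv]
    have hNinv : (0:ℝ) < (N:ℝ)⁻¹ := by positivity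
    have hd : (N:ℝ) - T.card ≤ n := by linarith [hc_ge]
    have h' : ((N:ℝ) - T.card) * (N:ℝ)⁻¹ ≤ (n:ℝ) * (N:ℝ)⁻¹ :=
      mul_le_mul_of_nonneg_right hd hNinv.le
    have h'' : (N:ℝ) * (N:ℝ)⁻¹ - (T.card:ℝ) * (N:ℝ)⁻¹ ≤ (n:ℝ) * (N:ℝ)⁻¹ := by
      rw [← sub_mul]; exact h'
    have hNN : (N:ℝ) * (N:ℝ)⁻¹ = 1 := mul_inv_cancel₀ (ne_of_gt hNR)
    linarith
  have h11 : (n:ℝ) / N ≤ ε := (div_le_iff₀ hNR).mpr (by linarith)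
  linarith
end

section
/- In a local deterministic hidden-variable model reproducing perfect correlations, parameter-independence and outcome-independence force determinism: if P_{XY|ABZ} = P_{X|AZ} × P_{Y|BZ} and for each a there exists b_a with P(X=Y | A=a, B=b_a, Z=z) = 1, then for every a and z the distribution P_{X|az} is deterministic, i.e., there exists x with P_{X|az}(x) = 1. -/
open Finset

/-!
If `∑ x, p x * q x = 1` for probability vectors `p` and `q`, then `∑ x, p x * (1 - q x) = 0`
is a sum of nonnegative terms, so `q = 1` on the support of `p`. A probability vector takes the
value `1` at most once, hence the support of `p` is a single point, where `p` must equal `1`.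
-/

section StdSimplex

variable {R ι : Type*} [CommRing R] [LinearOrder R] [IsStrictOrderedRing R] [Fintype ι]
  {p q : ι → R}

theorem eq_one_of_sum_mul_eq_one_of_ne_zero (hp : p ∈ stdSimplex R ι)
    (hq : q ∈ stdSimplex R ι) (h : ∑ x, p x * q x = 1) {x : ι} (hx : p x ≠ 0) : q x = 1 := by
  have hsum : ∑ y, p y * (1 - q y) = 0 := by
    simp only [mul_sub, mul_one, sum_sub_distrib, hp.2, h, sub_self]
  have hnonneg : ∀ y ∈ univ, 0 ≤ p y * (1 - q y) := fun y _ =>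
    mul_nonneg (hp.1 y) (sub_nonneg.2 (mem_Icc_of_mem_stdSimplex hq y).2)
  have hterm := (sum_eq_zero_iff_of_nonneg hnonneg).1 hsum x (mem_univ x)
  rcases mul_eq_zero.1 hterm with h0 | h1
  · exact absurd h0 hx
  · exact (sub_eq_zero.1 h1).symm

theorem eq_of_apply_eq_one_of_mem_stdSimplex (hq : q ∈ stdSimplex R ι) {x y : ι}
    (hx : q x = 1) (hy : q y = 1) : x = y := by
  classical
  by_contra hne
  have hle : q x + q y ≤ ∑ z, q z := by
    rw [← sum_pair hne]
    exact sum_le_sum_of_subset_of_nonneg (subset_univ _) fun z _ _ => hq.1 z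
  rw [hx, hy, hq.2] at hle
  linarith

theorem exists_eq_one_of_sum_mul_eq_one (hp : p ∈ stdSimplex R ι) (hq : q ∈ stdSimplex R ι)
    (h : ∑ x, p x * q x = 1) : ∃ x, p x = 1 := by
  obtain ⟨x, -, hx⟩ := exists_ne_zero_of_sum_ne_zero (hp.2.symm ▸ one_ne_zero : ∑ x, p x ≠ 0)
  have hqx := eq_one_of_sum_mul_eq_one_of_ne_zero hp hq h hx
  refine ⟨x, ?_⟩
  rw [← hp.2, sum_eq_single x]
  · intro y _ hyx
    by_contra hy
    exact hyx (eq_of_apply_eq_one_of_mem_stdSimplex hq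
      (eq_one_of_sum_mul_eq_one_of_ne_zero hp hq h hy) hqx)
  · exact fun hx' => absurd (mem_univ x) hx'

end StdSimplex

theorem local_hidden_variables_perfect_correlations_deterministic_general
    {A B Z : Type*}
    (pX : A → Z → Fin 2 → ℝ) (pY : B → Z → Fin 2 → ℝ)
    (hpX0 : ∀ a z x, 0 ≤ pX a z x) (hpX1 : ∀ a z, ∑ x, pX a z x = 1)
    (hpY0 : ∀ b z y, 0 ≤ pY b z y) (hpY1 : ∀ b z, ∑ y, pY b z y = 1)
    -- perfect correlations: P_{XY|ABZ} factorizes and P(X=Y|a,b_a,z) = 1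
    (hperf : ∀ a : A, ∃ b : B, ∀ z : Z, ∑ x, pX a z x * pY b z x = 1) :
    ∀ (a : A) (z : Z), ∃ x : Fin 2, pX a z x = 1 := by
  intro a z
  obtain ⟨b, hb⟩ := hperf a
  exact exists_eq_one_of_sum_mul_eq_one ⟨hpX0 a z, hpX1 a z⟩ ⟨hpY0 b z, hpY1 b z⟩ (hb z)

/-- In a local hidden-variable model (satisfying parameter-independence and
outcome-independence, i.e. `P_{XY|ABZ}(x,y|a,b,z) = P_{X|AZ}(x|a,z)·P_{Y|BZ}(y|b,z)`)
that reproduces perfect correlations — for each setting `a` there is a setting `b_a`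
with `P(X = Y | A = a, B = b_a, Z = z) = 1` — the local distributions are
deterministic: for every `a` and `z` there exists `x` with `P_{X|az}(x) = 1`. -/
theorem local_hidden_variables_perfect_correlations_deterministic
    {A B Z : Type*} [Fintype A] [Fintype B] [Fintype Z]
    (pX : A → Z → Fin 2 → ℝ) (pY : B → Z → Fin 2 → ℝ)
    (hpX0 : ∀ a z x, 0 ≤ pX a z x) (hpX1 : ∀ a z, ∑ x, pX a z x = 1)
    (hpY0 : ∀ b z y, 0 ≤ pY b z y) (hpY1 : ∀ b z, ∑ y, pY b z y = 1)
    -- perfect correlations: P_{XY|ABZ} factorizes and P(X=Y|a,b_a,z) = 1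
    (hperf : ∀ a : A, ∃ b : B, ∀ z : Z, ∑ x, pX a z x * pY b z x = 1) :
    ∀ (a : A) (z : Z), ∃ x : Fin 2, pX a z x = 1 :=
  local_hidden_variables_perfect_correlations_deterministic_general pX pY hpX0 hpX1 hpY0 hpY1 hperf
end
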